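/- Let T ∈ L(H) be an operator on a separable infinite-dimensional complex Hilbert space H and suppose λ ∈ ℂ belongs to the topological boundary ∂σ(T; H) of the spectrum of T. Then T − λI is not a universal operator. In particular, if σ(T; H) = ∂σ(T; H), then T − λI is not universal for any λ ∈ ℂ. -/

import Mathlib

/-!
A universal operator `U` contains, up to a nonzero scalar `c`, a similar copy of every operator,
in particular of a diagonal operator whose eigenvalues are dense in the closed unit disc.
Eigenvectors survive the similarity, so `σ(U)`, being closed, contains the closed disc of radius
`‖c‖`, and `0` is an interior point of `σ(U)`. For `U = T - λ` this says that `λ` is an interior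
point of `σ(T)`, so it cannot lie on the boundary of `σ(T)`.
-/

/-- Universal operator on a complex Hilbert space. -/
def IsUniversal {H : Type*} [NormedAddCommGroup H] [InnerProductSpace ℂ H]
    (U : H →L[ℂ] H) : Prop :=
  ∀ T : H →L[ℂ] H, ∃ M : Submodule ℂ H, IsClosed (M : Set H) ∧ (∀ x ∈ M, U x ∈ M) ∧
    ∃ c : ℂ, c ≠ 0 ∧ ∃ J : H ≃L[ℂ] M, ∀ x : H, U (J x : H) = c • ((J (T x) : H))

open Metric Set Module.End
open scoped Pointwise

theorem TopologicalSpace.exists_denseRange_of_infinite (ι X : Type*) [Infinite ι]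
    [TopologicalSpace X] [SeparableSpace X] [Nonempty X] : ∃ d : ι → X, DenseRange d := by
  let g := Infinite.natEmbedding ι
  refine ⟨denseSeq X ∘ Function.invFun g, ?_⟩
  rw [DenseRange, (Function.invFun_surjective g.injective).range_comp]
  exact denseRange_denseSeq X

theorem HilbertBasis.exists_clm_apply_eq_smul {ι 𝕜 E : Type*} [RCLike 𝕜] [NormedAddCommGroup E]
    [InnerProductSpace 𝕜 E] (b : HilbertBasis ι 𝕜 E) {d : ι → 𝕜} {K : ℝ}
    (hd : ∀ i, ‖d i‖ ≤ K) : ∃ S : E →L[𝕜] E, ∀ i, S (b i) = d i • b i := by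
  classical
  have hK : ∀ i, ‖d i • ContinuousLinearMap.id 𝕜 𝕜‖ ≤ max K 0 := fun i => by
    rw [norm_smul, ContinuousLinearMap.norm_id, mul_one]
    exact le_max_of_le_left (hd i)
  let D := lp.mapCLM 2 (fun i => d i • ContinuousLinearMap.id 𝕜 𝕜) (le_max_right K 0) hK
  refine ⟨b.repr.symm.toContinuousLinearEquiv.toContinuousLinearMap ∘L D ∘L
    b.repr.toContinuousLinearEquiv.toContinuousLinearMap, fun i => ?_⟩
  have hD : D (lp.single 2 i 1) = d i • lp.single 2 i 1 := by
    ext j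
    rcases eq_or_ne j i with rfl | h <;> simp [D, lp.single_apply, *]
  simp [b.repr_self, hD]

theorem exists_closedBall_subset_closure_eigenvalues {𝕜 E : Type*} [RCLike 𝕜]
    [NormedAddCommGroup E] [InnerProductSpace 𝕜 E] [CompleteSpace E]
    (hinf : ¬ FiniteDimensional 𝕜 E) :
    ∃ S : E →L[𝕜] E, closedBall (0 : 𝕜) 1 ⊆ closure {μ | HasEigenvalue (S : Module.End 𝕜 E) μ} := by
  obtain ⟨w, b, -⟩ := exists_hilbertBasis 𝕜 E
  have : Infinite w := by
    refine not_finite_iff_infinite.mp fun _ => hinf ?_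
    have := Fintype.ofFinite w
    exact .of_basis b.toOrthonormalBasis.toBasis
  have : Nonempty (closedBall (0 : 𝕜) 1) := ⟨⟨0, mem_closedBall_self zero_le_one⟩⟩
  obtain ⟨d, hd⟩ := TopologicalSpace.exists_denseRange_of_infinite w (closedBall (0 : 𝕜) 1)
  obtain ⟨S, hS⟩ := b.exists_clm_apply_eq_smul (d := fun i => (d i : 𝕜))
    (fun i => mem_closedBall_zero_iff.mp (d i).2)
  refine ⟨S, (Subtype.dense_iff.mp hd).trans (closure_mono ?_)⟩
  rintro _ ⟨_, ⟨i, rfl⟩, rfl⟩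
  exact hasEigenvalue_of_hasEigenvector ⟨mem_eigenspace_iff.mpr (hS i), b.orthonormal.ne_zero i⟩

theorem spectrum.sub_smul_one_eq_preimage {R A : Type*} [CommRing R] [Ring A] [Algebra R A]
    (a : A) (r : R) : spectrum R (a - r • 1) = (· + r) ⁻¹' spectrum R a := by
  ext μ
  rw [mem_preimage, spectrum.add_mem_iff, ← Algebra.algebraMap_eq_smul_one, neg_add_eq_sub]

theorem spectrum.zero_mem_interior_sub_smul_one_iff {R A : Type*} [CommRing R]
    [TopologicalSpace R] [IsTopologicalAddGroup R] [Ring A] [Algebra R A] (a : A) (r : R) :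
    0 ∈ interior (spectrum R (a - r • 1)) ↔ r ∈ interior (spectrum R a) := by
  rw [sub_smul_one_eq_preimage, ← Homeomorph.coe_addRight, ← Homeomorph.preimage_interior,
    mem_preimage, Homeomorph.coe_addRight]
  simp only [zero_add]

namespace IsUniversal

variable {H : Type*} [NormedAddCommGroup H] [InnerProductSpace ℂ H] {U : H →L[ℂ] H}

theorem exists_smul_hasEigenvalue (hU : IsUniversal U) (S : H →L[ℂ] H) :
    ∃ c : ℂ, c ≠ 0 ∧ ∀ μ, HasEigenvalue (S : Module.End ℂ H) μ →
      HasEigenvalue (U : Module.End ℂ H) (c * μ) := by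
  obtain ⟨M, -, -, c, hc, J, hJ⟩ := hU S
  refine ⟨c, hc, fun μ hμ => ?_⟩
  obtain ⟨v, hv⟩ := hμ.exists_hasEigenvector
  have hSv : S v = μ • v := hv.apply_eq_smul
  refine hasEigenvalue_of_hasEigenvector (x := (J v : H))
    ⟨mem_eigenspace_iff.mpr ?_, by simpa using hv.2⟩
  simp [hJ, hSv, mul_smul]

theorem zero_mem_interior_spectrum [CompleteSpace H] (hinf : ¬ FiniteDimensional ℂ H)
    (hU : IsUniversal U) : (0 : ℂ) ∈ interior (spectrum ℂ U) := by
  obtain ⟨S, hS⟩ := exists_closedBall_subset_closure_eigenvalues hinf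
  obtain ⟨c, hc, hcS⟩ := hU.exists_smul_hasEigenvalue S
  have hsub : closedBall (0 : ℂ) ‖c‖ ⊆ spectrum ℂ U := calc
    closedBall (0 : ℂ) ‖c‖ = c • closedBall 0 1 := by
      simp [_root_.smul_closedBall _ _ zero_le_one]
    _ ⊆ c • closure {μ | HasEigenvalue (S : Module.End ℂ H) μ} := smul_set_mono hS
    _ ⊆ closure (c • {μ | HasEigenvalue (S : Module.End ℂ H) μ}) := smul_closure_subset _ _
    _ ⊆ spectrum ℂ U := (spectrum.isClosed U).closure_subset_iff.mpr <| by
      rintro _ ⟨μ, hμ, rfl⟩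
      rw [ContinuousLinearMap.spectrum_eq]
      exact (hcS μ hμ).mem_spectrum
  exact interior_mono hsub <|
    mem_interior_iff_mem_nhds.mpr (closedBall_mem_nhds _ (norm_pos_iff.mpr hc))

end IsUniversal

theorem not_universal_of_boundary_spectrum {H : Type*} [NormedAddCommGroup H]
    [InnerProductSpace ℂ H] [CompleteSpace H]
    (hinf : ¬ FiniteDimensional ℂ H)
    (T : H →L[ℂ] H) :
    (∀ z ∈ frontier (spectrum ℂ T), ¬ IsUniversal (T - z • (1 : H →L[ℂ] H))) ∧
    (spectrum ℂ T = frontier (spectrum ℂ T) →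
      ∀ z : ℂ, ¬ IsUniversal (T - z • (1 : H →L[ℂ] H))) := by
  have mem_interior (z : ℂ) (hU : IsUniversal (T - z • (1 : H →L[ℂ] H))) :
      z ∈ interior (spectrum ℂ T) :=
    (spectrum.zero_mem_interior_sub_smul_one_iff T z).mp (hU.zero_mem_interior_spectrum hinf)
  have not_frontier : ∀ z ∈ frontier (spectrum ℂ T), ¬ IsUniversal (T - z • (1 : H →L[ℂ] H)) :=
    fun z hz hU => hz.2 (mem_interior z hU)
  exact ⟨not_frontier, fun heq z hU =>
    not_frontier z (heq ▸ interior_subset (mem_interior z hU)) hU⟩
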